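/- arXiv:2603.18720 — 7 statements merged into one kernel-verified Lean document; each statement's English description precedes it below -/
import Mathlib

section
/- Let V_J(m,k) = (1 - 1/m)·1/(m^(1/k) - 1) and V_H(m,k) = m^(1/k). Over all integers m ≥ 2 and k ≥ 1, the minimum of max{V_J(m,k), V_H(m,k)} is attained at m = 2, k = 2, with optimal value √2. -/
open Real

theorem static_policy_optimal_parameters :
    (∀ m k : ℕ, 2 ≤ m → 1 ≤ k →
      Real.sqrt 2 ≤
        max ((1 - 1 / (m : ℝ)) * (1 / ((m : ℝ) ^ ((1 : ℝ) / (k : ℝ)) - 1)))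
            ((m : ℝ) ^ ((1 : ℝ) / (k : ℝ)))) ∧
    max ((1 - 1 / (2 : ℝ)) * (1 / ((2 : ℝ) ^ ((1 : ℝ) / (2 : ℝ)) - 1)))
        ((2 : ℝ) ^ ((1 : ℝ) / (2 : ℝ))) = Real.sqrt 2 := by
  have hs2 : Real.sqrt 2 ^ 2 = 2 := Real.sq_sqrt (by norm_num)
  have hsnn : (0:ℝ) ≤ Real.sqrt 2 := Real.sqrt_nonneg 2
  have hs1 : (1:ℝ) < Real.sqrt 2 := by nlinarith
  have hscube : Real.sqrt 2 ^ 3 = 2 * Real.sqrt 2 := by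
    rw [pow_succ, hs2]
  constructor
  · intro m k hm hk
    set x : ℝ := (m : ℝ) ^ ((1 : ℝ) / (k : ℝ)) with hxdef
    have hm2 : (2:ℝ) ≤ (m:ℝ) := by exact_mod_cast hm
    have hk1 : (1:ℝ) ≤ (k:ℝ) := by exact_mod_cast hk
    have hx1 : 1 < x := by
      apply Real.one_lt_rpow_iff_of_pos (by linarith) |>.mpr
      exact Or.inl ⟨by linarith, by positivity⟩
    by_cases hcase : Real.sqrt 2 ≤ x
    · exact le_trans hcase (le_max_right _ _)
    push_neg at hcase
    apply le_trans _ (le_max_left _ _)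
    have hxm1 : 0 < x - 1 := by linarith
    rcases Nat.lt_or_ge m 3 with hm3 | hm3
    · -- m = 2
      have hm2' : m = 2 := by omega
      subst hm2'
      have hk3 : 3 ≤ k := by
        by_contra hkc
        push_neg at hkc
        interval_cases k
        · -- k = 1 : x = 2
          simp only [hxdef] at hcase
          norm_num at hcase
        · -- k = 2 : x = √2
          simp only [hxdef] at hcase
          have h22 : ((2:ℕ):ℝ) = (2:ℝ) := by norm_num
          rw [h22, ← Real.sqrt_eq_rpow] at hcase
          linarith
      have hk3' : (3:ℝ) ≤ (k:ℝ) := by exact_mod_cast hk3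
      have hxle : x ≤ (2:ℝ) ^ ((1:ℝ)/3) := by
        have h22 : ((2:ℕ):ℝ) = (2:ℝ) := by norm_num
        rw [hxdef, h22]
        apply Real.rpow_le_rpow_left_iff (by norm_num : (1:ℝ) < 2) |>.mpr
        rw [div_le_div_iff₀ (by linarith) (by norm_num)]
        linarith
      have hcube : ((2:ℝ) ^ ((1:ℝ)/3)) ^ (3:ℕ) = 2 := by
        rw [← Real.rpow_natCast ((2:ℝ) ^ ((1:ℝ)/3)) 3, ← Real.rpow_mul (by norm_num)]
        norm_num
      have hc2 : (2:ℝ) ≤ (1 + Real.sqrt 2 / 4) ^ (3:ℕ) := by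
        nlinarith [hs2, hs1, hscube]
      have h213 : (2:ℝ) ^ ((1:ℝ)/3) ≤ 1 + Real.sqrt 2 / 4 := by
        by_contra h
        push_neg at h
        have hlt := pow_lt_pow_left₀ h (by positivity : (0:ℝ) ≤ 1 + Real.sqrt 2 / 4)
          (by norm_num : (3:ℕ) ≠ 0)
        rw [hcube] at hlt
        linarith
      have hxb : x - 1 ≤ Real.sqrt 2 / 4 := by linarith
      have key : (1 - 1/((2:ℕ):ℝ)) * (1/(x-1)) = 1/(2*(x-1)) := by
        push_cast
        field_simp
        ring
      rw [key, le_div_iff₀ (by linarith)]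
      nlinarith [mul_le_mul_of_nonneg_left hxb hsnn, hs2]
    · -- m ≥ 3
      have hm3' : (3:ℝ) ≤ (m:ℝ) := by exact_mod_cast hm3
      have h23 : (2:ℝ)/3 ≤ 1 - 1/(m:ℝ) := by
        have : 1/(m:ℝ) ≤ 1/3 := by
          apply one_div_le_one_div_of_le <;> linarith
        linarith
      have hdiv : 1/(Real.sqrt 2 - 1) ≤ 1/(x - 1) := by
        apply one_div_le_one_div_of_le hxm1
        linarith
      have hchain : (2:ℝ)/3 * (1/(Real.sqrt 2 - 1)) ≤ (1 - 1/(m:ℝ)) * (1/(x-1)) := by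
        apply mul_le_mul h23 hdiv (le_of_lt (one_div_pos.mpr (by linarith))) (by linarith)
      apply le_trans _ hchain
      rw [mul_one_div, le_div_iff₀ (by linarith)]
      nlinarith
  · have h2 : ((2:ℝ) ^ ((1:ℝ)/2)) = Real.sqrt 2 := (Real.sqrt_eq_rpow 2).symm
    rw [h2]
    apply max_eq_right
    have key : (1 - 1/(2:ℝ)) * (1/(Real.sqrt 2 - 1)) = 1/(2*(Real.sqrt 2 - 1)) := by
      have hne : Real.sqrt 2 - 1 ≠ 0 := by linarith
      field_simp
      ring
    rw [key, div_le_iff₀ (by nlinarith)]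
    nlinarith
end

section
/- There exists λ ∈ [0,1] (e.g., λ = 0.76218) such that for all nonnegative reals a, b, c: λ·((√2+1)/2 · a + b + √2·c) + (1-λ)·(1/(2(2^(1/3)-1)) · a + b + 2^(1/3)·c) ≤ 1.3776·(a + b + c). -/
open Real

theorem best_of_two_static_1_3776 :
    ∃ lam : ℝ, lam ∈ Set.Icc (0 : ℝ) 1 ∧
      ∀ a b c : ℝ, 0 ≤ a → 0 ≤ b → 0 ≤ c →
        lam * ((Real.sqrt 2 + 1) / 2 * a + b + Real.sqrt 2 * c) +
          (1 - lam) * (1 / (2 * ((2 : ℝ) ^ ((1 : ℝ) / 3) - 1)) * a + b +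
            (2 : ℝ) ^ ((1 : ℝ) / 3) * c) ≤
        1.3776 * (a + b + c) := by
  refine ⟨0.7622, ⟨by norm_num, by norm_num⟩, ?_⟩
  intro a b c ha hb hc
  set s := Real.sqrt 2 with hs_def
  set t := (2 : ℝ) ^ ((1 : ℝ) / 3) with ht_def
  have hs_nonneg : 0 ≤ s := Real.sqrt_nonneg 2
  have hs2 : s ^ 2 = 2 := Real.sq_sqrt (by norm_num)
  have hs_lb : (1.414213 : ℝ) < s := by nlinarith
  have hs_ub : s < 1.414214 := by nlinarith
  have ht_pos : 0 < t := Real.rpow_pos_of_pos (by norm_num) _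
  have ht3 : t ^ 3 = 2 := by
    rw [ht_def, ← Real.rpow_natCast ((2:ℝ) ^ ((1:ℝ)/3)) 3,
      ← Real.rpow_mul (by norm_num : (0:ℝ) ≤ 2)]
    norm_num
  have ht_lb : (1.259921 : ℝ) < t := by nlinarith [sq_nonneg t, sq_nonneg (t - 1.259921), sq_nonneg (t + 1.259921)]
  have ht_ub : t < 1.259922 := by nlinarith [sq_nonneg t, sq_nonneg (t - 1.259922), sq_nonneg (t + 1.259922)]
  have hden : (0 : ℝ) < 2 * (t - 1) := by nlinarith
  have hinv : 1 / (2 * (t - 1)) ≤ 1.923663 := by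
    rw [div_le_iff₀ hden]; nlinarith
  have hinv0 : 0 ≤ 1 / (2 * (t - 1)) := by positivity
  have hA : 0.7622 * ((s + 1) / 2) + (1 - 0.7622) * (1 / (2 * (t - 1))) ≤ 1.3776 := by
    nlinarith
  have hC : 0.7622 * s + (1 - 0.7622) * t ≤ 1.3776 := by nlinarith
  nlinarith [mul_nonneg ha (by linarith : (0:ℝ) ≤ 1.3776 - (0.7622 * ((s + 1) / 2) + (1 - 0.7622) * (1 / (2 * (t - 1))))),
    mul_nonneg hc (by linarith : (0:ℝ) ≤ 1.3776 - (0.7622 * s + (1 - 0.7622) * t))]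
end

section
/- Fix reals B > 1 and t > 0, write φ for the fractional part of log_B(t) (relative to a fixed anchor), and define R_θ(t) = t·B^{1-φ+θ} for θ ∈ [0, φ] and R_θ(t) = t·B^{θ-φ} for θ ∈ (φ, 1]. Then ∫_0^1 R_θ(t) dθ = (B-1)/ln(B) · t. -/
open Real Set intervalIntegral

lemma integral_const_rpow' {B : ℝ} (hB : 1 < B) (a b : ℝ) :
    ∫ θ in a..b, B ^ θ = (B ^ b - B ^ a) / Real.log B := by
  have hB0 : 0 < B := lt_trans one_pos hB
  have hlog : Real.log B ≠ 0 := ne_of_gt (Real.log_pos hB)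
  have hcont : Continuous fun θ : ℝ => B ^ θ :=
    continuous_const.rpow continuous_id fun x => Or.inl (ne_of_gt hB0)
  have : ∫ θ in a..b, B ^ θ =
      (B ^ b / Real.log B) - (B ^ a / Real.log B) := by
    apply intervalIntegral.integral_eq_sub_of_hasDerivAt
    · intro x hx
      have h := ((Real.hasStrictDerivAt_const_rpow hB0 x).hasDerivAt).div_const (Real.log B)
      have : B ^ x * Real.log B / Real.log B = B ^ x := by
        field_simp
      rwa [this] at h
    · exact hcont.intervalIntegrable a b
  rw [this]; ring

theorem expected_rounded_value (B t φ T₀ : ℝ) (hB : 1 < B) (ht : 0 < t) (hT₀ : 0 < T₀)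
    (hφ : φ = Int.fract (Real.logb B (t / T₀)))
    (R : ℝ → ℝ)
    (hR : ∀ θ ∈ Set.Icc (0 : ℝ) 1,
      R θ = if θ ≤ φ then t * B ^ (1 - φ + θ) else t * B ^ (θ - φ)) :
    ∫ θ in (0 : ℝ)..1, R θ = (B - 1) / Real.log B * t := by
  have hB0 : 0 < B := lt_trans one_pos hB
  have hφ0 : 0 ≤ φ := hφ ▸ Int.fract_nonneg _
  have hφ1 : φ < 1 := hφ ▸ Int.fract_lt_one _
  have hlog : Real.log B ≠ 0 := ne_of_gt (Real.log_pos hB)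
  have hI1 : ∫ θ in (0:ℝ)..φ, R θ = ∫ θ in (0:ℝ)..φ, t * B ^ (1 - φ + θ) := by
    apply intervalIntegral.integral_congr
    intro x hx
    rw [Set.uIcc_of_le hφ0] at hx
    rw [hR x ⟨hx.1, le_trans hx.2 hφ1.le⟩, if_pos hx.2]
  have hI2 : ∫ θ in φ..1, R θ = ∫ θ in φ..1, t * B ^ (θ - φ) := by
    apply intervalIntegral.integral_congr_ae
    filter_upwards with x hx
    rw [Set.uIoc_of_le hφ1.le] at hx
    rw [hR x ⟨le_trans hφ0 hx.1.le, hx.2⟩, if_neg (not_le.mpr hx.1)]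
  have hcont1 : Continuous fun θ : ℝ => t * B ^ (1 - φ + θ) :=
    continuous_const.mul (continuous_const.rpow (by fun_prop) fun x => Or.inl (ne_of_gt hB0))
  have hcont2 : Continuous fun θ : ℝ => t * B ^ (θ - φ) :=
    continuous_const.mul (continuous_const.rpow (by fun_prop) fun x => Or.inl (ne_of_gt hB0))
  have hint1 : IntervalIntegrable R MeasureTheory.volume 0 φ := by
    apply (hcont1.intervalIntegrable 0 φ).congr
    intro x hx
    rw [Set.uIoc_of_le hφ0] at hx
    rw [hR x ⟨hx.1.le, le_trans hx.2 hφ1.le⟩, if_pos hx.2]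
  have hint2 : IntervalIntegrable R MeasureTheory.volume φ 1 := by
    apply (hcont2.intervalIntegrable φ 1).congr
    intro x hx
    rw [Set.uIoc_of_le hφ1.le] at hx
    rw [hR x ⟨le_trans hφ0 hx.1.le, hx.2⟩, if_neg (not_le.mpr hx.1)]
  have hsplit : ∫ θ in (0:ℝ)..1, R θ = (∫ θ in (0:ℝ)..φ, R θ) + ∫ θ in φ..1, R θ :=
    (intervalIntegral.integral_add_adjacent_intervals hint1 hint2).symm
  rw [hsplit, hI1, hI2]
  have e1 : ∫ θ in (0:ℝ)..φ, t * B ^ (1 - φ + θ)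
      = t * ∫ θ in (0:ℝ)..φ, B ^ (1 - φ + θ) := by
    rw [← intervalIntegral.integral_const_mul]
  have e2 : ∫ θ in φ..1, t * B ^ (θ - φ) = t * ∫ θ in φ..1, B ^ (θ - φ) := by
    rw [← intervalIntegral.integral_const_mul]
  rw [e1, e2]
  have s1 : ∫ θ in (0:ℝ)..φ, B ^ (1 - φ + θ) = ∫ θ in (1-φ+0)..(1-φ+φ), B ^ θ :=
    intervalIntegral.integral_comp_add_left (a := 0) (b := φ) (fun θ => B ^ θ) (1 - φ)
  have s2 : ∫ θ in φ..1, B ^ (θ - φ) = ∫ θ in (φ - φ)..(1 - φ), B ^ θ :=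
    intervalIntegral.integral_comp_sub_right (a := φ) (b := 1) (fun θ => B ^ θ) φ
  rw [s1, s2, integral_const_rpow' hB, integral_const_rpow' hB]
  have e3 : (1 : ℝ) - φ + φ = 1 := by ring
  have e4 : (1 : ℝ) - φ + 0 = 1 - φ := by ring
  rw [e3, e4, sub_self, Real.rpow_one, Real.rpow_zero]
  field_simp
  ring
end

section
/- Let V_J(m,k) = (1 - 1/m)·k/ln(m) and V_H(m,k) = k·(m^(1/k) - 1)/ln(m). Over all integers m ≥ 2 and k ≥ 1, the minimum of max{V_J(m,k), V_H(m,k)} is attained at m = 3, k = 2, with optimal value 2(√3 - 1)/ln 3. -/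
open Real

lemma sqrt3_ub : Real.sqrt 3 ≤ 1.7321 := by
  nlinarith [Real.sq_sqrt (by norm_num : (0:ℝ) ≤ 3), Real.sqrt_nonneg 3]

lemma sqrt3_lb : (5:ℝ)/3 ≤ Real.sqrt 3 := by
  nlinarith [Real.sq_sqrt (by norm_num : (0:ℝ) ≤ 3), Real.sqrt_nonneg 3]

lemma log3_lb : (1.0927 : ℝ) ≤ Real.log 3 := by
  rw [Real.le_log_iff_exp_le (by norm_num)]
  have h1 : Real.exp (1.0927 : ℝ) = Real.exp 1 * Real.exp 0.0927 := by
    rw [← Real.exp_add]; norm_num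
  have h5 : (0:ℝ) < Real.exp 0.0927 := Real.exp_pos _
  have h2 : Real.exp (0.0927 : ℝ) ≤ 1 / 0.9073 := by
    have h3 := Real.add_one_le_exp (-0.0927 : ℝ)
    rw [Real.exp_neg] at h3
    have h7 : Real.exp 0.0927 * (Real.exp 0.0927)⁻¹ = 1 :=
      mul_inv_cancel₀ (ne_of_gt h5)
    nlinarith [mul_le_mul_of_nonneg_left h3 h5.le]
  have h6 := Real.exp_one_lt_d9
  rw [h1]
  nlinarith [Real.exp_pos (1:ℝ)]

lemma log3_pos : (0:ℝ) < Real.log 3 := by linarith [log3_lb]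

lemma c_ub : 2 * (Real.sqrt 3 - 1) / Real.log 3 ≤ 67/50 := by
  rw [div_le_iff₀ log3_pos]
  nlinarith [sqrt3_ub, log3_lb]

lemma cubic_le_exp {t : ℝ} (ht : 0 ≤ t) : 1 + t + t^2/2 + t^3/6 ≤ Real.exp t := by
  have h := Real.sum_le_exp_of_nonneg ht 4
  simp [Finset.sum_range_succ, Nat.factorial] at h
  nlinarith [h]

theorem randomized_policy_optimal_parameters :
    (∀ m k : ℕ, 2 ≤ m → 1 ≤ k →
      2 * (Real.sqrt 3 - 1) / Real.log 3 ≤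
        max ((1 - 1 / (m : ℝ)) * (k : ℝ) / Real.log m)
            ((k : ℝ) * ((m : ℝ) ^ ((1 : ℝ) / (k : ℝ)) - 1) / Real.log m)) ∧
    max ((1 - 1 / (3 : ℝ)) * (2 : ℝ) / Real.log 3)
        ((2 : ℝ) * ((3 : ℝ) ^ ((1 : ℝ) / (2 : ℝ)) - 1) / Real.log 3) =
      2 * (Real.sqrt 3 - 1) / Real.log 3 := by
  have hs3 : (3:ℝ) ^ ((1:ℝ)/2) = Real.sqrt 3 := by
    rw [Real.sqrt_eq_rpow]
  have hl2u : Real.log 2 < 0.7 := by linarith [Real.log_two_lt_d9]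
  have hl2l : (0:ℝ) < Real.log 2 := Real.log_pos (by norm_num)
  have hc := c_ub
  constructor
  · intro m k hm hk
    rcases Nat.lt_or_ge m 5 with hm5 | hm5
    · -- m = 2, 3, 4
      interval_cases m
      · -- m = 2
        rcases Nat.lt_or_ge k 2 with hk2 | hk2
        · -- k = 1
          have hk1 : k = 1 := by omega
          subst hk1
          refine le_trans hc (le_trans ?_ (le_max_right _ _))
          push_cast
          rw [show ((1:ℝ)/1) = 1 by norm_num, Real.rpow_one, le_div_iff₀ hl2l]
          linarith
        · -- k ≥ 2
          refine le_trans hc (le_trans ?_ (le_max_left _ _))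
          have hkr : (2:ℝ) ≤ (k:ℝ) := by exact_mod_cast hk2
          push_cast
          rw [le_div_iff₀ hl2l]
          nlinarith
      · -- m = 3
        rcases Nat.lt_or_ge k 3 with hk3 | hk3
        · interval_cases k
          · -- k = 1
            refine le_trans ?_ (le_max_right _ _)
            push_cast
            rw [show ((1:ℝ)/1) = 1 by norm_num, Real.rpow_one,
              div_le_div_iff₀ log3_pos log3_pos]
            nlinarith [sqrt3_ub, log3_pos]
          · -- k = 2
            refine le_trans ?_ (le_max_right _ _)
            push_cast
            rw [hs3]
        · -- k ≥ 3
          refine le_trans ?_ (le_max_left _ _)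
          have hkr : (3:ℝ) ≤ (k:ℝ) := by exact_mod_cast hk3
          push_cast
          rw [div_le_div_iff₀ log3_pos log3_pos]
          nlinarith [sqrt3_ub, log3_pos]
      · -- m = 4
        have hl4 : Real.log 4 = 2 * Real.log 2 := by
          rw [show (4:ℝ) = 2^2 by norm_num, Real.log_pow]; push_cast; ring
        rcases Nat.lt_or_ge k 3 with hk3 | hk3
        · interval_cases k
          · -- k = 1
            refine le_trans hc (le_trans ?_ (le_max_right _ _))
            push_cast
            rw [show ((1:ℝ)/1) = 1 by norm_num, Real.rpow_one, hl4,
              le_div_iff₀ (by linarith)]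
            nlinarith
          · -- k = 2
            refine le_trans hc (le_trans ?_ (le_max_right _ _))
            have h42 : (4:ℝ) ^ ((1:ℝ)/(2:ℝ)) = 2 := by
              rw [show (4:ℝ) = 2^(2:ℕ) by norm_num, ← Real.rpow_natCast 2 2,
                ← Real.rpow_mul (by norm_num)]
              norm_num
            push_cast
            rw [h42, hl4, le_div_iff₀ (by linarith)]
            nlinarith
        · -- k ≥ 3
          refine le_trans hc (le_trans ?_ (le_max_left _ _))
          have hkr : (3:ℝ) ≤ (k:ℝ) := by exact_mod_cast hk3
          push_cast
          rw [hl4, le_div_iff₀ (by linarith)]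
          nlinarith
    · -- m ≥ 5
      have hmr : (5:ℝ) ≤ (m:ℝ) := by exact_mod_cast hm5
      have hL : (0:ℝ) < Real.log m := Real.log_pos (by linarith)
      have hkr : (1:ℝ) ≤ (k:ℝ) := by exact_mod_cast hk
      rcases le_or_gt ((67:ℝ)/40 * Real.log m) (k:ℝ) with hbig | hsmall
      · refine le_trans hc (le_trans ?_ (le_max_left _ _))
        rw [le_div_iff₀ hL]
        have h1m : (4:ℝ)/5 ≤ 1 - 1/(m:ℝ) := by
          have : (1:ℝ)/(m:ℝ) ≤ 1/5 :=
            one_div_le_one_div_of_le (by norm_num) hmr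
          linarith
        nlinarith
      · refine le_trans hc (le_trans ?_ (le_max_right _ _))
        set t : ℝ := Real.log m / k with htdef
        have hkpos : (0:ℝ) < (k:ℝ) := by linarith
        have ht : (40:ℝ)/67 < t := by
          rw [htdef, lt_div_iff₀ hkpos]
          nlinarith
        have htk : t * k = Real.log m := by
          rw [htdef, div_mul_cancel₀ _ hkpos.ne']
        have hrw : (m:ℝ) ^ ((1:ℝ)/(k:ℝ)) = Real.exp t := by
          rw [Real.rpow_def_of_pos (by linarith), htdef]
          ring_nf
        rw [hrw, le_div_iff₀ hL]
        have hexp := cubic_le_exp (by linarith : (0:ℝ) ≤ t)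
        have key : (67:ℝ)/50 * t ≤ Real.exp t - 1 := by nlinarith
        calc (67:ℝ)/50 * Real.log m = (67/50 * t) * k := by rw [← htk]; ring
          _ ≤ (Real.exp t - 1) * k := by nlinarith
          _ = (k:ℝ) * (Real.exp t - 1) := by ring
  · have hA : (1 - 1/(3:ℝ)) * 2 / Real.log 3 ≤ 2 * ((3:ℝ)^((1:ℝ)/2) - 1) / Real.log 3 := by
      rw [hs3, div_le_div_iff₀ log3_pos log3_pos]
      nlinarith [sqrt3_lb, log3_pos]
    rw [max_eq_right hA, hs3]
end

section
/- There exists λ ∈ [0,1] (e.g., λ = 0.25548) such that for all nonnegative reals a, b, c: λ·(1/(2 ln 2)·a + 1/(2 ln 2)·b + 1/ln 2·c) + (1-λ)·(1/ln 2·a + (2-√2)/ln 2·b + 2(√2-1)/ln 2·c) ≤ 1.2585·(a + b + c). -/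
open Real

theorem best_of_two_randomized_1_2585 :
    ∃ lam : ℝ, lam ∈ Set.Icc (0 : ℝ) 1 ∧
      ∀ a b c : ℝ, 0 ≤ a → 0 ≤ b → 0 ≤ c →
        lam * (1 / (2 * Real.log 2) * a + 1 / (2 * Real.log 2) * b +
            1 / Real.log 2 * c) +
          (1 - lam) * (1 / Real.log 2 * a + (2 - Real.sqrt 2) / Real.log 2 * b +
            2 * (Real.sqrt 2 - 1) / Real.log 2 * c) ≤
        1.2585 * (a + b + c) := by
  refine ⟨0.25548, ⟨by norm_num, by norm_num⟩, ?_⟩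
  intro a b c ha hb hc
  have hL : (0.6931471803 : ℝ) < Real.log 2 := Real.log_two_gt_d9
  have hLpos : (0 : ℝ) < Real.log 2 := by linarith
  have hLne : Real.log 2 ≠ 0 := ne_of_gt hLpos
  have hs0 : (0 : ℝ) ≤ Real.sqrt 2 := Real.sqrt_nonneg 2
  have hs2 : Real.sqrt 2 ^ 2 = 2 := Real.sq_sqrt (by norm_num)
  have hsu : Real.sqrt 2 < 1.4142135624 := by nlinarith
  have hsl : (1.4142135623 : ℝ) < Real.sqrt 2 := by nlinarith
  rw [show (1 : ℝ) / (2 * Real.log 2) * a + 1 / (2 * Real.log 2) * b +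
      1 / Real.log 2 * c = (a / 2 + b / 2 + c) / Real.log 2 by field_simp,
    show (1 : ℝ) / Real.log 2 * a + (2 - Real.sqrt 2) / Real.log 2 * b +
      2 * (Real.sqrt 2 - 1) / Real.log 2 * c =
      (a + (2 - Real.sqrt 2) * b + 2 * (Real.sqrt 2 - 1) * c) / Real.log 2 by
        field_simp]
  rw [← mul_div_assoc, ← mul_div_assoc, ← add_div, div_le_iff₀ hLpos]
  nlinarith [mul_le_mul_of_nonneg_left hL.le ha, mul_le_mul_of_nonneg_left hL.le hb,
    mul_le_mul_of_nonneg_left hL.le hc, mul_le_mul_of_nonneg_left hsu.le hc,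
    mul_le_mul_of_nonneg_left hsu.le hb]
end

section
/- For every real m ≥ 1, the minimum over x ∈ (0,∞) of max{(1 - 1/m)/(m^(1/x) - 1), m^(1/x)} equals (1 + √(5 - 4/m))/2, and this value is an increasing function of m. -/
open Real Set

theorem continuous_min_of_max_multipliers :
    (∀ m : ℝ, 1 ≤ m →
      IsLeast {v : ℝ | ∃ x : ℝ, 0 < x ∧
          v = max ((1 - 1 / m) / (m ^ ((1 : ℝ) / x) - 1)) (m ^ ((1 : ℝ) / x))}
        ((1 + Real.sqrt (5 - 4 / m)) / 2)) ∧
    StrictMonoOn (fun m : ℝ => (1 + Real.sqrt (5 - 4 / m)) / 2) (Set.Ici (1 : ℝ)) := by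
  constructor
  · intro m hm
    have hm0 : (0:ℝ) < m := lt_of_lt_of_le one_pos hm
    have h4m : 4 / m ≤ 4 := by
      rw [div_le_iff₀ hm0]; nlinarith
    have h5 : (1:ℝ) ≤ 5 - 4 / m := by linarith
    have h50 : (0:ℝ) ≤ 5 - 4 / m := by linarith
    set s := Real.sqrt (5 - 4 / m) with hs
    have hs1 : 1 ≤ s := by
      rw [hs, show (1:ℝ) = Real.sqrt 1 by simp]
      exact Real.sqrt_le_sqrt h5
    have hssq : s ^ 2 = 5 - 4 / m := Real.sq_sqrt h50
    set v := (1 + s) / 2 with hv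
    have hv1 : 1 ≤ v := by rw [hv]; linarith
    have hssq' : s ^ 2 * m = 5 * m - 4 := by
      rw [hssq]; field_simp
    have hkey : v * (v - 1) = 1 - 1 / m := by
      rw [hv]; field_simp; linear_combination hssq'
    constructor
    · -- membership
      rcases eq_or_lt_of_le hm with h1 | h1
      · -- m = 1
        refine ⟨1, one_pos, ?_⟩
        have hsone : s = 1 := by rw [hs, ← h1]; norm_num
        rw [← h1]; simp [hv, hsone]
      · -- 1 < m
        have hv1' : 1 < v := by
          have : 1 < s := by
            rw [hs, show (1:ℝ) = Real.sqrt 1 by simp]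
            apply Real.sqrt_lt_sqrt (by norm_num)
            have : 4 / m < 4 := by rw [div_lt_iff₀ hm0]; nlinarith
            linarith
          rw [hv]; linarith
        have hlv : 0 < Real.log v := Real.log_pos hv1'
        have hlm : 0 < Real.log m := Real.log_pos h1
        refine ⟨Real.log m / Real.log v, div_pos hlm hlv, ?_⟩
        have hx : m ^ ((1:ℝ) / (Real.log m / Real.log v)) = v := by
          rw [one_div, inv_div, Real.rpow_def_of_pos hm0]
          rw [mul_div_cancel₀ _ (ne_of_gt hlm)]
          exact Real.exp_log (by linarith)
        rw [hx]
        have hdv : (1 - 1 / m) / (v - 1) = v := by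
          rw [← hkey]; exact mul_div_cancel_right₀ v (by linarith)
        rw [hdv, max_self]
    · -- lower bound
      rintro w ⟨x, hx, rfl⟩
      set t := m ^ ((1:ℝ) / x) with ht
      by_cases hvt : v ≤ t
      · exact le_trans hvt (le_max_right _ _)
      · push_neg at hvt
        have hm1 : 1 < m := by
          rcases eq_or_lt_of_le hm with h1 | h1
          · exfalso
            have hs1' : s = 1 := by rw [hs, ← h1]; norm_num
            have hv' : v = 1 := by rw [hv, hs1']; norm_num
            have htone : t = 1 := by rw [ht, ← h1, Real.one_rpow]
            rw [hv', htone] at hvt; exact lt_irrefl 1 hvt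
          · exact h1
        have ht1 : 1 < t := by
          rw [ht]
          exact Real.one_lt_rpow_iff_of_pos hm0 |>.mpr (Or.inl ⟨hm1, by positivity⟩)
        refine le_trans ?_ (le_max_left _ _)
        rw [le_div_iff₀ (by linarith)]
        calc v * (t - 1) ≤ v * (v - 1) := by nlinarith
        _ = 1 - 1 / m := hkey
  · intro a ha b hb hab
    simp only [Set.mem_Ici] at ha hb
    simp only
    have ha0 : (0:ℝ) < a := lt_of_lt_of_le one_pos ha
    have hb0 : (0:ℝ) < b := lt_of_lt_of_le one_pos (lt_of_le_of_lt ha hab).le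
    have h1 : 5 - 4 / a < 5 - 4 / b := by
      have : 4 / b < 4 / a := div_lt_div_of_pos_left (by norm_num) ha0 hab
      linarith
    have h2 : (0:ℝ) ≤ 5 - 4 / a := by
      have : 4 / a ≤ 4 := by rw [div_le_iff₀ ha0]; nlinarith
      linarith
    have := Real.sqrt_lt_sqrt h2 h1
    linarith
end

section
/- The function B ↦ 2(√B - 1)/ln(B) is strictly increasing on (1, ∞), and for every B ≥ 41/20, 2(√B - 1)/ln(B) > 5/(6 ln 2). -/
open Real Set

lemma key_ineq {t : ℝ} (ht : 1 < t) : t - 1 < t * Real.log t := by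
  have ht0 : 0 < t := lt_trans one_pos ht
  have h := Real.log_lt_sub_one_of_pos (x := 1 / t) (by positivity)
    (by intro h; field_simp at h; linarith)
  rw [Real.log_div one_ne_zero (ne_of_gt ht0), Real.log_one] at h
  have := mul_lt_mul_of_pos_left h ht0
  have htne : t ≠ 0 := ne_of_gt ht0
  field_simp at this
  nlinarith

lemma g_hasDeriv {x : ℝ} (hx : 1 < x) :
    HasDerivAt (fun t : ℝ => (t - 1) / Real.log t)
      ((1 * Real.log x - (x - 1) * x⁻¹) / Real.log x ^ 2) x := by
  have hx0 : 0 < x := lt_trans one_pos hx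
  have hlog : Real.log x ≠ 0 := ne_of_gt (Real.log_pos hx)
  exact ((hasDerivAt_id x).sub_const 1).div (Real.hasDerivAt_log (ne_of_gt hx0)) hlog

lemma g_strictMono :
    StrictMonoOn (fun t : ℝ => (t - 1) / Real.log t) (Set.Ioi (1 : ℝ)) := by
  apply strictMonoOn_of_deriv_pos (convex_Ioi 1)
  · intro x hx
    exact (g_hasDeriv hx).differentiableAt.continuousAt.continuousWithinAt
  · intro x hx
    rw [interior_Ioi] at hx
    rw [(g_hasDeriv hx).deriv]
    have hx0 : 0 < x := lt_trans one_pos hx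
    have hlog : 0 < Real.log x := Real.log_pos hx
    have hk := key_ineq hx
    apply div_pos _ (by positivity)
    rw [one_mul]
    have : (x - 1) * x⁻¹ < Real.log x := by
      rw [← div_eq_mul_inv, div_lt_iff₀ hx0]
      nlinarith
    linarith

lemma f_eq_g {B : ℝ} (hB : 1 < B) :
    2 * (Real.sqrt B - 1) / Real.log B = (Real.sqrt B - 1) / Real.log (Real.sqrt B) := by
  have hB0 : (0 : ℝ) ≤ B := le_of_lt (lt_trans one_pos hB)
  rw [Real.log_sqrt hB0]
  have hlog : Real.log B ≠ 0 := ne_of_gt (Real.log_pos hB)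
  field_simp

lemma sqrt_mem {B : ℝ} (hB : 1 < B) : 1 < Real.sqrt B := by
  have : (1 : ℝ) = Real.sqrt 1 := (Real.sqrt_one).symm
  rw [this]
  exact Real.sqrt_lt_sqrt (by norm_num) hB

lemma f_strictMono :
    StrictMonoOn (fun B : ℝ => 2 * (Real.sqrt B - 1) / Real.log B) (Set.Ioi (1 : ℝ)) := by
  intro a ha b hb hab
  simp only [Set.mem_Ioi] at ha hb
  have h1 := f_eq_g ha
  have h2 := f_eq_g hb
  simp only
  rw [h1, h2]
  exact g_strictMono (Set.mem_Ioi.mpr (sqrt_mem ha)) (Set.mem_Ioi.mpr (sqrt_mem hb))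
    (Real.sqrt_lt_sqrt (le_of_lt (lt_trans one_pos ha)) hab)

lemma base_bound :
    5 / (6 * Real.log 2) < 2 * (Real.sqrt ((41:ℝ)/20) - 1) / Real.log ((41:ℝ)/20) := by
  have hL2gt : (0.6931471803 : ℝ) < Real.log 2 := Real.log_two_gt_d9
  have hL2lt : Real.log 2 < 0.6931471808 := Real.log_two_lt_d9
  have hs : (1.43178 : ℝ) < Real.sqrt ((41:ℝ)/20) := by
    rw [show (1.43178 : ℝ) = Real.sqrt (1.43178^2) by
      rw [Real.sqrt_sq (by norm_num)]]
    exact Real.sqrt_lt_sqrt (by positivity) (by norm_num)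
  have hLsplit : Real.log ((41:ℝ)/20) = Real.log 2 + Real.log ((41:ℝ)/40) := by
    rw [← Real.log_mul (by norm_num) (by norm_num)]
    norm_num
  have hsmall : Real.log ((41:ℝ)/40) < 1/40 := by
    have := Real.log_lt_sub_one_of_pos (x := (41:ℝ)/40) (by norm_num) (by norm_num)
    linarith
  have hLpos : 0 < Real.log ((41:ℝ)/20) := Real.log_pos (by norm_num)
  have hL2pos : 0 < Real.log 2 := Real.log_pos (by norm_num)
  rw [div_lt_div_iff₀ (by positivity) hLpos]
  nlinarith [mul_pos (sub_pos.mpr hs) hL2pos, mul_pos (sub_pos.mpr hs) hLpos]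

theorem holding_multiplier_mono_and_bound :
    StrictMonoOn (fun B : ℝ => 2 * (Real.sqrt B - 1) / Real.log B) (Set.Ioi (1 : ℝ)) ∧
    ∀ B : ℝ, (41 : ℝ) / 20 ≤ B →
      5 / (6 * Real.log 2) < 2 * (Real.sqrt B - 1) / Real.log B := by
  refine ⟨f_strictMono, fun B hB => ?_⟩
  rcases eq_or_lt_of_le hB with h | h
  · rw [← h]; exact base_bound
  · have h1 : ((41:ℝ)/20) ∈ Set.Ioi (1:ℝ) := by norm_num
    have h2 : B ∈ Set.Ioi (1:ℝ) := by simp only [Set.mem_Ioi]; linarith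
    exact lt_trans base_bound (f_strictMono h1 h2 h)
end
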